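/- arXiv:1910.01938 — 6 statements merged into one kernel-verified Lean document; each statement's English description precedes it below -/
import Mathlib

section
/- Let X be a one-sided shift space and for (k,l) ∈ ℕ×ℕ with k ≤ l define x ∼_{k,l} x' iff x_{[0,k)} = x'_{[0,k)} and ⋃_{l'≤l} P_{l'}(σ^k(x)) = ⋃_{l'≤l} P_{l'}(σ^k(x')). If k₁ ≤ k₂ and l₁ − k₁ ≤ l₂ − k₂ (with k₁ ≤ l₁ and k₂ ≤ l₂), then x ∼_{k₂,l₂} x' implies x ∼_{k₁,l₁} x'. -/
open Function Set

/-- The shift map on one-sided sequences. -/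
def shiftMap {A : Type*} : (ℕ → A) → (ℕ → A) := fun x n => x (n + 1)

/-- Prepend a finite word to a one-sided sequence. -/
def wordAppend {A : Type*} (μ : List A) (x : ℕ → A) : ℕ → A :=
  fun n => if h : n < μ.length then μ.get ⟨n, h⟩ else x (n - μ.length)

/-- A one-sided shift space: a closed, shift-invariant subset of `A^ℕ`. -/
def IsShiftSpace {A : Type*} [TopologicalSpace A] (X : Set (ℕ → A)) : Prop :=
  IsClosed X ∧ ∀ x ∈ X, shiftMap x ∈ X

/-- `⋃_{l' ≤ l} P_{l'}(x)`: the set of words of length at most `l` that may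
precede `x` in `X`. -/
def predUpTo {A : Type*} (X : Set (ℕ → A)) (l : ℕ) (x : ℕ → A) : Set (List A) :=
  {μ : List A | μ.length ≤ l ∧ wordAppend μ x ∈ X}

/-- The `(k,l)`-equivalence relation: `x ∼_{k,l} x'` iff `x_{[0,k)} = x'_{[0,k)}`
and `⋃_{l'≤l} P_{l'}(σ^k(x)) = ⋃_{l'≤l} P_{l'}(σ^k(x'))`. -/
def klEquiv {A : Type*} (X : Set (ℕ → A)) (k l : ℕ) (x x' : ℕ → A) : Prop :=
  (∀ i < k, x i = x' i) ∧
    predUpTo X l (shiftMap^[k] x) = predUpTo X l (shiftMap^[k] x')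


/-!
Prepending the block `x_{[k₁,k₂)}` to `σ^{k₂}(x)` gives back `σ^{k₁}(x)`. Since `x` and `x'` share
this block, a word `μ` may precede `σ^{k₁}(x)` iff `μ` followed by the block may precede `σ^{k₂}(x)`,
and likewise for `x'`. The block lengthens `μ` by `k₂ - k₁`, which stays within the bound `l₂`
because `l₁ - k₁ ≤ l₂ - k₂`.
-/

section

variable {A : Type*}

lemma shiftMap_iterate_apply (x : ℕ → A) (k n : ℕ) : shiftMap^[k] x n = x (n + k) := by
  induction k generalizing x with
  | zero => rfl
  | succ k ih =>
    rw [Function.iterate_succ_apply, ih]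
    simp only [shiftMap, Nat.add_assoc]

lemma wordAppend_append (μ ν : List A) (y : ℕ → A) :
    wordAppend (μ ++ ν) y = wordAppend μ (wordAppend ν y) := by
  funext n
  simp only [wordAppend, List.length_append, List.get_eq_getElem]
  split_ifs <;> grind

lemma wordAppend_ofFn_shiftMap_iterate (y : ℕ → A) (a m : ℕ) :
    wordAppend (List.ofFn fun i : Fin m => y (a + i)) (shiftMap^[a + m] y) = shiftMap^[a] y := by
  funext n
  simp only [wordAppend, List.length_ofFn, List.get_eq_getElem, List.getElem_ofFn,
    shiftMap_iterate_apply]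
  split_ifs <;> congr 1 <;> omega

lemma predUpTo_eq_inter (X : Set (ℕ → A)) {l l' : ℕ} (h : l ≤ l') (y : ℕ → A) :
    predUpTo X l y = predUpTo X l' y ∩ {μ | μ.length ≤ l} := by
  ext μ
  simp only [predUpTo, Set.mem_inter_iff, Set.mem_ofPred_eq]
  constructor
  · rintro ⟨hμ, hmem⟩
    exact ⟨⟨hμ.trans h, hmem⟩, hμ⟩
  · rintro ⟨⟨-, hmem⟩, hμ⟩
    exact ⟨hμ, hmem⟩

lemma predUpTo_eq_of_le (X : Set (ℕ → A)) {l l' : ℕ} (h : l ≤ l') {y y' : ℕ → A}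
    (he : predUpTo X l' y = predUpTo X l' y') : predUpTo X l y = predUpTo X l y' := by
  rw [predUpTo_eq_inter X h, predUpTo_eq_inter X h, he]

lemma predUpTo_shiftMap_iterate_subset (X : Set (ℕ → A)) {a m l : ℕ} {x x' : ℕ → A}
    (hagree : ∀ i < m, x (a + i) = x' (a + i))
    (hp : predUpTo X (l + m) (shiftMap^[a + m] x) ⊆ predUpTo X (l + m) (shiftMap^[a + m] x')) :
    predUpTo X l (shiftMap^[a] x) ⊆ predUpTo X l (shiftMap^[a] x') := by
  rintro μ ⟨hlen, hmem⟩
  set w := List.ofFn fun i : Fin m => x (a + i)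
  have hw : (List.ofFn fun i : Fin m => x' (a + i)) = w :=
    congrArg List.ofFn (funext fun i => (hagree i i.isLt).symm)
  have hμw : μ ++ w ∈ predUpTo X (l + m) (shiftMap^[a + m] x) := by
    refine ⟨by simp [w, hlen], ?_⟩
    rwa [wordAppend_append, wordAppend_ofFn_shiftMap_iterate]
  have hμw' := (hp hμw).2
  rw [wordAppend_append, ← hw, wordAppend_ofFn_shiftMap_iterate] at hμw'
  exact ⟨hlen, hμw'⟩

lemma predUpTo_shiftMap_iterate_eq (X : Set (ℕ → A)) {a m l : ℕ} {x x' : ℕ → A}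
    (hagree : ∀ i < m, x (a + i) = x' (a + i))
    (hp : predUpTo X (l + m) (shiftMap^[a + m] x) = predUpTo X (l + m) (shiftMap^[a + m] x')) :
    predUpTo X l (shiftMap^[a] x) = predUpTo X l (shiftMap^[a] x') :=
  (predUpTo_shiftMap_iterate_subset X hagree hp.le).antisymm
    (predUpTo_shiftMap_iterate_subset X (fun i hi => (hagree i hi).symm) hp.ge)

end

theorem klEquiv_mono_general {A : Type*}
    (X : Set (ℕ → A))
    (k₁ l₁ k₂ l₂ : ℕ) (hkl₂ : k₂ ≤ l₂)
    (hk : k₁ ≤ k₂) (hl : l₁ - k₁ ≤ l₂ - k₂)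
    (x x' : ℕ → A)
    (h : klEquiv X k₂ l₂ x x') : klEquiv X k₁ l₁ x x' := by
  obtain ⟨hprefix, hpred⟩ := h
  obtain ⟨m, rfl⟩ := Nat.exists_eq_add_of_le hk
  refine ⟨fun i hi => hprefix i (by omega), predUpTo_shiftMap_iterate_eq X (m := m) ?_ ?_⟩
  · exact fun i hi => hprefix _ (by omega)
  · exact predUpTo_eq_of_le X (by omega) hpred

/-- If `(k₁, l₁) ⪯ (k₂, l₂)` (i.e. `k₁ ≤ k₂` and `l₁ − k₁ ≤ l₂ − k₂`), then
`x ∼_{k₂,l₂} x'` implies `x ∼_{k₁,l₁} x'`. -/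
theorem klEquiv_mono {A : Type*} [Fintype A] [TopologicalSpace A] [DiscreteTopology A]
    (X : Set (ℕ → A)) (hX : IsShiftSpace X)
    (k₁ l₁ k₂ l₂ : ℕ) (hkl₁ : k₁ ≤ l₁) (hkl₂ : k₂ ≤ l₂)
    (hk : k₁ ≤ k₂) (hl : l₁ - k₁ ≤ l₂ - k₂)
    (x x' : ℕ → A) (hx : x ∈ X) (hx' : x' ∈ X)
    (h : klEquiv X k₂ l₂ x x') : klEquiv X k₁ l₁ x x' :=
  klEquiv_mono_general X k₁ l₁ k₂ l₂ hkl₂ hk hl x x' h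
end

section
/- Let X and Y be one-sided shift spaces with surjective shift maps, and suppose φ: X → Y is a sliding block code which is almost injective with lag ℓ₁ (φ(x) = φ(x') implies σ_X^{ℓ₁}(x) = σ_X^{ℓ₁}(x')) and almost surjective with lag ℓ₂ (for each y ∈ Y there is x ∈ X with σ_Y^{ℓ₂}(φ(x)) = σ_Y^{ℓ₂}(y)). Then the map h: Λ_X → Λ_Y defined on the inverse limits by h((..., x₂, x₁, x₀)) = (..., φ(x₂), φ(x₁), φ(x₀)) is a bijection (in fact a conjugacy of the two-sided shift spaces). -/
/-!
Along a point `(…, x₁, x₀)` of `Λ_X` every coordinate is recovered from a later one by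
`x_i = σ^ℓ(x_{i+ℓ})`, so a lag `ℓ` is absorbed by looking `ℓ` steps further back. Almost injectivity
then makes `h` injective. For surjectivity, almost surjectivity puts every coordinate `y_m` of a
point of `Λ_Y` in `φ(X)`; if `φ(z_m) = y_m`, the points `σ(z_{m+1})` and `z_m` have the same image, so
almost injectivity makes `(σ^{ℓ₁}(z_{m+ℓ₁}))_m` a point of `Λ_X`, and it maps to `(y_m)_m`.
-/

open Function Set

/-- The two-sided shift space `Λ_X` as the inverse limit `lim← (X, σ_X)`, realized
as sequences `(..., x₂, x₁, x₀)` with `x_i ∈ X` and `σ_X(x_{i+1}) = x_i`. -/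
def invLimit {A : Type*} (X : Set (ℕ → A)) : Set (ℕ → ℕ → A) :=
  {F : ℕ → ℕ → A | ∀ i : ℕ, F i ∈ X ∧ shiftMap (F (i + 1)) = F i}

section InverseLimit

variable {A B : Type*} {X : Set (ℕ → A)} {Y : Set (ℕ → B)} {φ : (ℕ → A) → (ℕ → B)}

theorem shiftMap_iterate_comm (k : ℕ) (x : ℕ → A) :
    shiftMap^[k] (shiftMap x) = shiftMap (shiftMap^[k] x) :=
  (Commute.iterate_self shiftMap k).eq x

theorem map_iterate_shiftMap_of_forall_mem (hX : MapsTo shiftMap X X)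
    (hφe : ∀ x ∈ X, φ (shiftMap x) = shiftMap (φ x)) (k : ℕ) {x : ℕ → A} (hx : x ∈ X) :
    φ (shiftMap^[k] x) = shiftMap^[k] (φ x) := by
  induction k with
  | zero => rfl
  | succ k ih => rw [iterate_succ_apply', iterate_succ_apply', hφe _ (hX.iterate k hx), ih]

theorem iterate_shiftMap_of_mem_invLimit {F : ℕ → ℕ → A} (hF : F ∈ invLimit X) (i k : ℕ) :
    shiftMap^[k] (F (i + k)) = F i := by
  induction k with
  | zero => rfl
  | succ k ih => rw [iterate_succ_apply, ← add_assoc, (hF (i + k)).2, ih]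

theorem mapsTo_invLimit (hφm : MapsTo φ X Y) (hφe : ∀ x ∈ X, φ (shiftMap x) = shiftMap (φ x)) :
    MapsTo (fun (F : ℕ → ℕ → A) i => φ (F i)) (invLimit X) (invLimit Y) := fun F hF i =>
  ⟨hφm (hF i).1, by rw [← hφe _ (hF (i + 1)).1, (hF i).2]⟩

theorem injOn_invLimit {ℓ : ℕ}
    (hai : ∀ x ∈ X, ∀ x' ∈ X, φ x = φ x' → shiftMap^[ℓ] x = shiftMap^[ℓ] x') :
    InjOn (fun (F : ℕ → ℕ → A) i => φ (F i)) (invLimit X) := by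
  intro F hF G hG hFG
  funext i
  have hlag := hai _ (hF (i + ℓ)).1 _ (hG (i + ℓ)).1 (congrFun hFG (i + ℓ))
  rw [← iterate_shiftMap_of_mem_invLimit hF i ℓ, ← iterate_shiftMap_of_mem_invLimit hG i ℓ, hlag]

theorem mem_image_of_mem_invLimit (hX : MapsTo shiftMap X X)
    (hφe : ∀ x ∈ X, φ (shiftMap x) = shiftMap (φ x)) {ℓ : ℕ}
    (has : ∀ y ∈ Y, ∃ x ∈ X, shiftMap^[ℓ] (φ x) = shiftMap^[ℓ] y)
    {G : ℕ → ℕ → B} (hG : G ∈ invLimit Y) (m : ℕ) : G m ∈ φ '' X := by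
  obtain ⟨x, hx, hxG⟩ := has (G (m + ℓ)) (hG (m + ℓ)).1
  refine ⟨shiftMap^[ℓ] x, hX.iterate ℓ hx, ?_⟩
  rw [map_iterate_shiftMap_of_forall_mem hX hφe ℓ hx, hxG, iterate_shiftMap_of_mem_invLimit hG]

theorem surjOn_invLimit (hX : MapsTo shiftMap X X)
    (hφe : ∀ x ∈ X, φ (shiftMap x) = shiftMap (φ x)) {ℓ₁ ℓ₂ : ℕ}
    (hai : ∀ x ∈ X, ∀ x' ∈ X, φ x = φ x' → shiftMap^[ℓ₁] x = shiftMap^[ℓ₁] x')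
    (has : ∀ y ∈ Y, ∃ x ∈ X, shiftMap^[ℓ₂] (φ x) = shiftMap^[ℓ₂] y) :
    SurjOn (fun (F : ℕ → ℕ → A) i => φ (F i)) (invLimit X) (invLimit Y) := by
  intro G hG
  choose z hzX hzG using mem_image_of_mem_invLimit hX hφe has hG
  have hlag (m : ℕ) : shiftMap^[ℓ₁] (shiftMap (z (m + 1))) = shiftMap^[ℓ₁] (z m) :=
    hai _ (hX (hzX (m + 1))) _ (hzX m) (by rw [hφe _ (hzX (m + 1)), hzG, hzG, (hG m).2])
  refine ⟨fun m => shiftMap^[ℓ₁] (z (m + ℓ₁)), fun m => ⟨hX.iterate ℓ₁ (hzX _), ?_⟩, ?_⟩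
  · rw [← shiftMap_iterate_comm, add_right_comm, hlag]
  · funext m
    dsimp only
    rw [map_iterate_shiftMap_of_forall_mem hX hφe ℓ₁ (hzX _), hzG,
      iterate_shiftMap_of_mem_invLimit hG]

end InverseLimit

theorem continuousOn_pi_map {A B : Type*} [TopologicalSpace A] [TopologicalSpace B]
    {ι : Type*} {X : Set A} {φ : A → B} (hφ : ContinuousOn φ X) :
    ContinuousOn (fun (F : ι → A) i => φ (F i)) (univ.pi fun _ => X) :=
  continuousOn_pi.2 fun i =>
    hφ.comp (continuous_apply i).continuousOn fun _ hF => hF i (mem_univ i)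

theorem induced_map_on_invLimit_bijective_general {A B : Type*}
    [TopologicalSpace A] [TopologicalSpace B]
    (X : Set (ℕ → A)) (Y : Set (ℕ → B))
    (hX : IsShiftSpace X)
    (φ : (ℕ → A) → (ℕ → B)) (hφc : ContinuousOn φ X) (hφm : MapsTo φ X Y)
    (hφe : ∀ x ∈ X, φ (shiftMap x) = shiftMap (φ x))
    (ℓ₁ ℓ₂ : ℕ)
    (hai : ∀ x ∈ X, ∀ x' ∈ X, φ x = φ x' → shiftMap^[ℓ₁] x = shiftMap^[ℓ₁] x')
    (has : ∀ y ∈ Y, ∃ x ∈ X, shiftMap^[ℓ₂] (φ x) = shiftMap^[ℓ₂] y) :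
    Set.BijOn (fun (F : ℕ → ℕ → A) (i : ℕ) => φ (F i)) (invLimit X) (invLimit Y) ∧
      (∀ F ∈ invLimit X,
        (fun i : ℕ => φ (shiftMap (F i))) = fun i : ℕ => shiftMap (φ (F i))) ∧
      ContinuousOn (fun (F : ℕ → ℕ → A) (i : ℕ) => φ (F i)) (invLimit X) := by
  refine ⟨⟨mapsTo_invLimit hφm hφe, injOn_invLimit hai, surjOn_invLimit hX.2 hφe hai has⟩,
    fun F hF => funext fun i => hφe _ (hF i).1, ?_⟩
  exact (continuousOn_pi_map hφc).mono fun F hF i _ => (hF i).1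

/-- If `φ : X → Y` is a sliding block code which is almost injective with lag `ℓ₁`
and almost surjective with lag `ℓ₂`, then the induced map
`h((..., x₂, x₁, x₀)) = (..., φ(x₂), φ(x₁), φ(x₀))` between the inverse limits is a
bijection, in fact a conjugacy of the two-sided shift spaces. -/
theorem induced_map_on_invLimit_bijective {A B : Type*} [Fintype A]
    [TopologicalSpace A] [DiscreteTopology A] [Fintype B] [TopologicalSpace B]
    [DiscreteTopology B]
    (X : Set (ℕ → A)) (Y : Set (ℕ → B))
    (hX : IsShiftSpace X) (hY : IsShiftSpace Y)
    (hXsurj : SurjOn shiftMap X X) (hYsurj : SurjOn shiftMap Y Y)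
    (φ : (ℕ → A) → (ℕ → B)) (hφc : ContinuousOn φ X) (hφm : MapsTo φ X Y)
    (hφe : ∀ x ∈ X, φ (shiftMap x) = shiftMap (φ x))
    (ℓ₁ ℓ₂ : ℕ)
    (hai : ∀ x ∈ X, ∀ x' ∈ X, φ x = φ x' → shiftMap^[ℓ₁] x = shiftMap^[ℓ₁] x')
    (has : ∀ y ∈ Y, ∃ x ∈ X, shiftMap^[ℓ₂] (φ x) = shiftMap^[ℓ₂] y) :
    Set.BijOn (fun (F : ℕ → ℕ → A) (i : ℕ) => φ (F i)) (invLimit X) (invLimit Y) ∧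
      (∀ F ∈ invLimit X,
        (fun i : ℕ => φ (shiftMap (F i))) = fun i : ℕ => shiftMap (φ (F i))) ∧
      ContinuousOn (fun (F : ℕ → ℕ → A) (i : ℕ) => φ (F i)) (invLimit X) :=
  induced_map_on_invLimit_bijective_general X Y hX φ hφc hφm hφe ℓ₁ ℓ₂ hai has
end

section
/- Let X and Y be one-sided shift spaces and let (h, l_X, k_X, l_Y, k_Y) be a stabilizer-preserving continuous orbit equivalence which is positive, meaning l_X − k_X = n_X + b_X − b_X∘σ_X for some continuous n_X: X → ℕ and b_X: X → ℤ, and similarly for l_Y − k_Y. Then for every periodic point x ∈ X with least period p, one has l_X^{(p)}(x) − k_X^{(p)}(x) = Σ_{i=0}^{p-1} n_X(σ_X^i(x)) ≥ 0, and hence l_X^{(p)}(x) − k_X^{(p)}(x) = lp(h(x)); that is, the orbit equivalence is least period preserving. -/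
open Function Set

/-- A point is eventually periodic if `σ^n(x) = σ^m(x)` for some `n ≠ m`. -/
def EventuallyPeriodic {A : Type*} (x : ℕ → A) : Prop :=
  ∃ p m : ℕ, 0 < p ∧ shiftMap^[m + p] x = shiftMap^[m] x

/-- `p` is the least period `lp(x)` of an eventually periodic point `x`:
the minimum of `{p ∈ ℕ₊ : ∃ n m, p = n − m, σ^n(x) = σ^m(x)}`. -/
def IsLeastPeriod {A : Type*} (x : ℕ → A) (p : ℕ) : Prop :=
  (0 < p ∧ ∃ m : ℕ, shiftMap^[m + p] x = shiftMap^[m] x) ∧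
    ∀ q : ℕ, (0 < q ∧ ∃ m : ℕ, shiftMap^[m + q] x = shiftMap^[m] x) → p ≤ q

/-! Over a periodic orbit of period `p` the coboundary `b - b ∘ σ` telescopes to
`b x - b (σ^p x) = 0`, so the `p`-th Birkhoff sum of `l_X - k_X` equals that of the
nonnegative `n_X`. Being nonnegative, it equals its absolute value, which stabilizer
preservation identifies with `lp(h x)`. -/

theorem birkhoffSum_coboundary {α G : Type*} [AddCommGroup G] (f : α → α) (b : α → G)
    (n : ℕ) (x : α) : birkhoffSum f (fun y => b y - b (f y)) n x = b x - b (f^[n] x) := by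
  simp only [birkhoffSum, ← iterate_succ_apply' f]
  exact Finset.sum_range_sub' (fun k => b (f^[k] x)) n

theorem Function.IsPeriodicPt.birkhoffSum_eq_of_eqOn_add_coboundary {α G : Type*}
    [AddCommGroup G] {f : α → α} {s : Set α} (hs : MapsTo f s s) {g φ b : α → G}
    (hg : ∀ y ∈ s, g y = φ y + b y - b (f y)) {p : ℕ} {x : α} (hx : x ∈ s)
    (hp : IsPeriodicPt f p x) : birkhoffSum f g p x = birkhoffSum f φ p x := by
  have hg' : birkhoffSum f g p x = birkhoffSum f (φ + fun y => b y - b (f y)) p x :=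
    Finset.sum_congr rfl fun k _ => by
      rw [hg _ (hs.iterate k hx), Pi.add_apply, add_sub_assoc]
  rw [hg', birkhoffSum_add', birkhoffSum_coboundary, hp.eq, sub_self, add_zero]

theorem IsLeastPeriod.isPeriodicPt {A : Type*} {x : ℕ → A} {p : ℕ} (hlp : IsLeastPeriod x p)
    (hx : x ∈ periodicPts shiftMap) : IsPeriodicPt shiftMap p x := by
  obtain ⟨⟨-, m, hm⟩, -⟩ := hlp
  refine isPeriodicPt_of_mem_periodicPts_of_isPeriodicPt_iterate (n := m) hx ?_
  rw [IsPeriodicPt, IsFixedPt, ← iterate_add_apply, add_comm, hm]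

theorem positive_stabilizer_preserving_is_least_period_preserving_general
    {A B : Type*} [TopologicalSpace A]
    (X : Set (ℕ → A))
    (hX : IsShiftSpace X)
    (h : (ℕ → A) → (ℕ → B))
    (kX lX : (ℕ → A) → ℕ)
    -- stabilizer-preserving
    (hspX : ∀ x ∈ X, ∀ p : ℕ, (∃ q : ℕ, 0 < q ∧ shiftMap^[q] x = x) →
      IsLeastPeriod x p → ∀ q : ℕ, IsLeastPeriod (h x) q →
        |(∑ i ∈ Finset.range p, (lX (shiftMap^[i] x) : ℤ)) -
          ∑ i ∈ Finset.range p, (kX (shiftMap^[i] x) : ℤ)| = (q : ℤ))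
    -- positivity
    (nX : (ℕ → A) → ℕ) (bX : (ℕ → A) → ℤ)
    (hposX : ∀ x ∈ X, (lX x : ℤ) - (kX x : ℤ) = (nX x : ℤ) + bX x - bX (shiftMap x)) :
    ∀ x ∈ X, ∀ p : ℕ, (∃ q : ℕ, 0 < q ∧ shiftMap^[q] x = x) → IsLeastPeriod x p →
      ((∑ i ∈ Finset.range p, (lX (shiftMap^[i] x) : ℤ)) -
          ∑ i ∈ Finset.range p, (kX (shiftMap^[i] x) : ℤ)
        = ∑ i ∈ Finset.range p, (nX (shiftMap^[i] x) : ℤ)) ∧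
      (0 ≤ (∑ i ∈ Finset.range p, (lX (shiftMap^[i] x) : ℤ)) -
          ∑ i ∈ Finset.range p, (kX (shiftMap^[i] x) : ℤ)) ∧
      (∀ q : ℕ, IsLeastPeriod (h x) q →
        (∑ i ∈ Finset.range p, (lX (shiftMap^[i] x) : ℤ)) -
          ∑ i ∈ Finset.range p, (kX (shiftMap^[i] x) : ℤ) = (q : ℤ)) := by
  intro x hx p hper hlp
  have hsum : (∑ i ∈ Finset.range p, (lX (shiftMap^[i] x) : ℤ)) -
      ∑ i ∈ Finset.range p, (kX (shiftMap^[i] x) : ℤ)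
      = ∑ i ∈ Finset.range p, (nX (shiftMap^[i] x) : ℤ) := by
    rw [← Finset.sum_sub_distrib]
    exact (hlp.isPeriodicPt hper).birkhoffSum_eq_of_eqOn_add_coboundary
      (fun y hy => hX.2 y hy) hposX hx
  have hnonneg : 0 ≤ (∑ i ∈ Finset.range p, (lX (shiftMap^[i] x) : ℤ)) -
      ∑ i ∈ Finset.range p, (kX (shiftMap^[i] x) : ℤ) :=
    hsum ▸ Finset.sum_nonneg fun i _ => Int.natCast_nonneg _
  refine ⟨hsum, hnonneg, fun q hq => ?_⟩
  rw [← hspX x hx p hper hlp q hq, abs_of_nonneg hnonneg]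

/-- A positive stabilizer-preserving continuous orbit equivalence is least period
preserving: for every periodic `x ∈ X` with least period `p`, the difference
`l_X^{(p)}(x) − k_X^{(p)}(x)` equals `Σ_{i<p} n_X(σ_X^i(x)) ≥ 0`, and hence equals
the least period of `h(x)`. -/
theorem positive_stabilizer_preserving_is_least_period_preserving
    {A B : Type*} [Fintype A] [TopologicalSpace A] [DiscreteTopology A]
    [Fintype B] [TopologicalSpace B] [DiscreteTopology B]
    (X : Set (ℕ → A)) (Y : Set (ℕ → B))
    (hX : IsShiftSpace X) (hY : IsShiftSpace Y)
    (h : (ℕ → A) → (ℕ → B)) (h' : (ℕ → B) → (ℕ → A))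
    (kX lX : (ℕ → A) → ℕ) (kY lY : (ℕ → B) → ℕ)
    (hm : MapsTo h X Y) (hm' : MapsTo h' Y X)
    (hleft : ∀ x ∈ X, h' (h x) = x) (hright : ∀ y ∈ Y, h (h' y) = y)
    (hc : ContinuousOn h X) (hc' : ContinuousOn h' Y)
    (hkXc : ContinuousOn kX X) (hlXc : ContinuousOn lX X)
    (hkYc : ContinuousOn kY Y) (hlYc : ContinuousOn lY Y)
    (hcocX : ∀ x ∈ X, shiftMap^[lX x] (h x) = shiftMap^[kX x] (h (shiftMap x)))
    (hcocY : ∀ y ∈ Y, shiftMap^[lY y] (h' y) = shiftMap^[kY y] (h' (shiftMap y)))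
    -- stabilizer-preserving
    (hepX : ∀ x ∈ X, EventuallyPeriodic x → EventuallyPeriodic (h x))
    (hepY : ∀ y ∈ Y, EventuallyPeriodic y → EventuallyPeriodic (h' y))
    (hspX : ∀ x ∈ X, ∀ p : ℕ, (∃ q : ℕ, 0 < q ∧ shiftMap^[q] x = x) →
      IsLeastPeriod x p → ∀ q : ℕ, IsLeastPeriod (h x) q →
        |(∑ i ∈ Finset.range p, (lX (shiftMap^[i] x) : ℤ)) -
          ∑ i ∈ Finset.range p, (kX (shiftMap^[i] x) : ℤ)| = (q : ℤ))
    (hspY : ∀ y ∈ Y, ∀ p : ℕ, (∃ q : ℕ, 0 < q ∧ shiftMap^[q] y = y) →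
      IsLeastPeriod y p → ∀ q : ℕ, IsLeastPeriod (h' y) q →
        |(∑ i ∈ Finset.range p, (lY (shiftMap^[i] y) : ℤ)) -
          ∑ i ∈ Finset.range p, (kY (shiftMap^[i] y) : ℤ)| = (q : ℤ))
    -- positivity
    (nX : (ℕ → A) → ℕ) (bX : (ℕ → A) → ℤ)
    (hnXc : ContinuousOn nX X) (hbXc : ContinuousOn bX X)
    (hposX : ∀ x ∈ X, (lX x : ℤ) - (kX x : ℤ) = (nX x : ℤ) + bX x - bX (shiftMap x))
    (nY : (ℕ → B) → ℕ) (bY : (ℕ → B) → ℤ)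
    (hnYc : ContinuousOn nY Y) (hbYc : ContinuousOn bY Y)
    (hposY : ∀ y ∈ Y, (lY y : ℤ) - (kY y : ℤ) = (nY y : ℤ) + bY y - bY (shiftMap y)) :
    ∀ x ∈ X, ∀ p : ℕ, (∃ q : ℕ, 0 < q ∧ shiftMap^[q] x = x) → IsLeastPeriod x p →
      ((∑ i ∈ Finset.range p, (lX (shiftMap^[i] x) : ℤ)) -
          ∑ i ∈ Finset.range p, (kX (shiftMap^[i] x) : ℤ)
        = ∑ i ∈ Finset.range p, (nX (shiftMap^[i] x) : ℤ)) ∧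
      (0 ≤ (∑ i ∈ Finset.range p, (lX (shiftMap^[i] x) : ℤ)) -
          ∑ i ∈ Finset.range p, (kX (shiftMap^[i] x) : ℤ)) ∧
      (∀ q : ℕ, IsLeastPeriod (h x) q →
        (∑ i ∈ Finset.range p, (lX (shiftMap^[i] x) : ℤ)) -
          ∑ i ∈ Finset.range p, (kX (shiftMap^[i] x) : ℤ) = (q : ℤ)) :=
  positive_stabilizer_preserving_is_least_period_preserving_general X hX h kX lX hspX nX bX hposX
end

section
/- Let X be a one-sided shift space and define the stabilization (X × ℕ, S_X) by S_X(x, n) = (x, n−1) for n > 0 and S_X(x, 0) = (σ_X(x), 0). Let H^{X×ℕ} = C(X×ℕ, ℤ)/{f − f∘S_X} and H^X = C(X, ℤ)/{f − f∘σ_X} be the ordered cohomology groups with positive cones given by classes of nonnegative functions. Then the map ι₀^*: C(X×ℕ, ℤ) → C(X, ℤ), ι₀^*(ξ)(x) = ξ(x, 0), induces a group isomorphism H(ι₀): H^{X×ℕ} → H^X which maps the positive cone H^{X×ℕ}_+ onto H^X_+ and sends [1_{X×ℕ}] to [1_X]. -/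
open Function Set

/-- The subgroup of coboundaries `{f − f∘T}` in `C(Z, ℤ)`. -/
def cobSub {Z : Type*} [TopologicalSpace Z] (T : C(Z, Z)) : AddSubgroup C(Z, ℤ) where
  carrier := {g : C(Z, ℤ) | ∃ f : C(Z, ℤ), g = f - f.comp T}
  zero_mem' := ⟨0, by ext z; simp⟩
  add_mem' := by
    rintro a b ⟨f, rfl⟩ ⟨g, rfl⟩
    exact ⟨f + g, by ext z; simp; ring⟩
  neg_mem' := by
    rintro a ⟨f, rfl⟩
    exact ⟨-f, by ext z; simp; ring⟩

/-- The ordered cohomology group `H^Z = C(Z, ℤ)/{f − f∘T}`. -/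
abbrev CohoGroup {Z : Type*} [TopologicalSpace Z] (T : C(Z, Z)) :=
  C(Z, ℤ) ⧸ cobSub T

/-- The positive cone: classes of nonnegative continuous functions. -/
def posCone {Z : Type*} [TopologicalSpace Z] (T : C(Z, Z)) : Set (CohoGroup T) :=
  {c : CohoGroup T | ∃ f : C(Z, ℤ), (∀ z : Z, 0 ≤ f z) ∧
    (QuotientAddGroup.mk f : CohoGroup T) = c}

/-- The continuous inclusion `z ↦ (z, 0)` of `Z` into its stabilization `Z × ℕ`. -/
def incl0 {Z : Type*} [TopologicalSpace Z] : C(Z, Z × ℕ) :=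
  ⟨fun z => (z, 0), Continuous.prodMk continuous_id continuous_const⟩

/-!
The argument works for any system `(Z, T)` and any `S` on `Z × ℕ` that steps down the tower and
applies `T` at level `0`. Since `S ∘ ι₀ = ι₀ ∘ T`, pulling back along `ι₀` maps coboundaries to
coboundaries, and so does pulling back along the projection `π : Z × ℕ → Z`, via the explicit
primitive `F(z, n) = f z + n (f z - f (T z))` of `(f - f ∘ T) ∘ π`. Since `ι₀^* π^* = id`, it
remains to see that `ξ - π^* ι₀^* ξ` is a coboundary, which is witnessed by the telescoping sum
`F(z, n) = ∑_{k < n} (ξ(z, k + 1) - ξ(z, 0))`. Both pullbacks preserve nonnegativity.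
-/

namespace ContinuousMap

lemma comp_mem_cobSub_of_semiconj {Y Z : Type*} [TopologicalSpace Y] [TopologicalSpace Z]
    {T : C(Z, Z)} {T' : C(Y, Y)} {φ : C(Y, Z)} (hφ : ∀ y, T (φ y) = φ (T' y))
    {g : C(Z, ℤ)} (hg : g ∈ cobSub T) : g.comp φ ∈ cobSub T' := by
  obtain ⟨f, rfl⟩ := hg
  exact ⟨f.comp φ, by ext y; simp [hφ]⟩

end ContinuousMap

section Stabilization

variable {Z : Type*} [TopologicalSpace Z] {T : C(Z, Z)} {S : C(Z × ℕ, Z × ℕ)}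

lemma comp_fst_mem_cobSub (hS0 : ∀ z, S (z, 0) = (T z, 0))
    (hSs : ∀ z n, S (z, n + 1) = (z, n)) {g : C(Z, ℤ)} (hg : g ∈ cobSub T) :
    g.comp ContinuousMap.fst ∈ cobSub S := by
  obtain ⟨f, rfl⟩ := hg
  have hF : Continuous fun p : Z × ℕ => f p.1 + (p.2 : ℤ) * (f p.1 - f (T p.1)) :=
    continuous_prod_of_discrete_right.2 fun n => by dsimp only; fun_prop
  refine ⟨⟨_, hF⟩, ?_⟩
  ext ⟨z, _ | n⟩
  · simp [hS0]
  · simp [hSs]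
    ring

lemma sub_comp_incl0_comp_fst_mem_cobSub (hS0 : ∀ z, S (z, 0) = (T z, 0))
    (hSs : ∀ z n, S (z, n + 1) = (z, n)) (ξ : C(Z × ℕ, ℤ)) :
    ξ - (ξ.comp incl0).comp ContinuousMap.fst ∈ cobSub S := by
  have hF : Continuous fun p : Z × ℕ =>
      ∑ k ∈ Finset.range p.2, (ξ (p.1, k + 1) - ξ (p.1, 0)) :=
    continuous_prod_of_discrete_right.2 fun n =>
      continuous_finsetSum (Finset.range n) fun k _ => by fun_prop
  refine ⟨⟨_, hF⟩, ?_⟩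
  ext ⟨z, _ | n⟩
  · simp [incl0, hS0]
  · simp [incl0, hSs, Finset.sum_range_succ]
    ring

variable (T S)

def stabilizationEquiv (hS0 : ∀ z, S (z, 0) = (T z, 0))
    (hSs : ∀ z n, S (z, n + 1) = (z, n)) : CohoGroup S ≃+ CohoGroup T where
  __ := QuotientAddGroup.map (cobSub S) (cobSub T) (ContinuousMap.compAddMonoidHom' incl0)
    fun _ => ContinuousMap.comp_mem_cobSub_of_semiconj hS0
  invFun := QuotientAddGroup.map (cobSub T) (cobSub S)
    (ContinuousMap.compAddMonoidHom' ContinuousMap.fst) fun _ => comp_fst_mem_cobSub hS0 hSs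
  left_inv c := QuotientAddGroup.induction_on c fun ξ =>
    (QuotientAddGroup.eq_iff_sub_mem.2 (sub_comp_incl0_comp_fst_mem_cobSub hS0 hSs ξ)).symm
  right_inv c := QuotientAddGroup.induction_on c fun _ => rfl

variable {T S}

lemma stabilizationEquiv_mk (hS0 : ∀ z, S (z, 0) = (T z, 0))
    (hSs : ∀ z n, S (z, n + 1) = (z, n)) (ξ : C(Z × ℕ, ℤ)) :
    stabilizationEquiv T S hS0 hSs (QuotientAddGroup.mk ξ) = QuotientAddGroup.mk (ξ.comp incl0) :=
  rfl

lemma stabilizationEquiv_image_posCone (hS0 : ∀ z, S (z, 0) = (T z, 0))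
    (hSs : ∀ z n, S (z, n + 1) = (z, n)) :
    stabilizationEquiv T S hS0 hSs '' posCone S = posCone T := by
  ext c
  constructor
  · rintro ⟨-, ⟨ξ, hξ, rfl⟩, rfl⟩
    exact ⟨ξ.comp incl0, fun z => hξ (incl0 z), rfl⟩
  · rintro ⟨f, hf, rfl⟩
    exact ⟨_, ⟨f.comp ContinuousMap.fst, fun p => hf p.1, rfl⟩, rfl⟩

end Stabilization

theorem stabilized_cohomology_iso_general {A : Type*} [TopologicalSpace A]
    (X : Set (ℕ → A))
    (σ' : C(X, X))
    (S : C(X × ℕ, X × ℕ))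
    (hS0 : ∀ x : X, S (x, 0) = (σ' x, 0))
    (hSs : ∀ (x : X) (n : ℕ), S (x, n + 1) = (x, n)) :
    ∃ Φ : CohoGroup S ≃+ CohoGroup σ',
      (∀ ξ : C(X × ℕ, ℤ),
        Φ (QuotientAddGroup.mk ξ) = QuotientAddGroup.mk (ξ.comp incl0)) ∧
      Φ '' posCone S = posCone σ' ∧
      Φ (QuotientAddGroup.mk (1 : C(X × ℕ, ℤ))) =
        QuotientAddGroup.mk (1 : C(X, ℤ)) :=
  ⟨stabilizationEquiv σ' S hS0 hSs, stabilizationEquiv_mk hS0 hSs,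
    stabilizationEquiv_image_posCone hS0 hSs, stabilizationEquiv_mk hS0 hSs 1⟩

/-- The map `ι₀^*(ξ)(x) = ξ(x, 0)` induces a group isomorphism
`H(ι₀): H^{X×ℕ} → H^X` between the ordered cohomology of the stabilization
`(X × ℕ, S_X)` and that of `(X, σ_X)`, mapping the positive cone onto the
positive cone and `[1_{X×ℕ}]` to `[1_X]`. -/
theorem stabilized_cohomology_iso {A : Type*} [Fintype A] [TopologicalSpace A]
    [DiscreteTopology A]
    (X : Set (ℕ → A)) (hXc : IsClosed X) (hXi : ∀ x ∈ X, shiftMap x ∈ X)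
    (σ' : C(X, X)) (hσ' : ∀ x : X, ((σ' x : ℕ → A)) = shiftMap (x : ℕ → A))
    (S : C(X × ℕ, X × ℕ))
    (hS0 : ∀ x : X, S (x, 0) = (σ' x, 0))
    (hSs : ∀ (x : X) (n : ℕ), S (x, n + 1) = (x, n)) :
    ∃ Φ : CohoGroup S ≃+ CohoGroup σ',
      (∀ ξ : C(X × ℕ, ℤ),
        Φ (QuotientAddGroup.mk ξ) = QuotientAddGroup.mk (ξ.comp incl0)) ∧
      Φ '' posCone S = posCone σ' ∧
      Φ (QuotientAddGroup.mk (1 : C(X × ℕ, ℤ))) =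
        QuotientAddGroup.mk (1 : C(X, ℤ)) :=
  stabilized_cohomology_iso_general X σ' S hS0 hSs
end

section
/- Let φ: X → Y be a surjective sliding block code between one-sided shift spaces which is almost injective with lag ℓ (φ(x) = φ(x') implies σ_X^ℓ(x) = σ_X^ℓ(x')). Then the map H(φ): H^Y → H^X given by H(φ)([g]) = [g ∘ φ] is a well-defined isomorphism of the ordered cohomology groups, mapping H^Y_+ onto H^X_+ and [1_Y] to [1_X]. -/
open Function Set

/-!
Almost injectivity with lag `ℓ` says that `σ_X^ℓ` is constant on the fibres of `φ`. As `X`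
is compact and `Y` Hausdorff, `φ` is a quotient map, so `σ_X^ℓ` descends to a continuous
`ψ : Y → X` with `ψ ∘ φ = σ_X^ℓ` and `φ ∘ ψ = σ_Y^ℓ`, which again intertwines the shifts.
Composition with an iterate of the shift is the identity on cohomology, so the maps induced
by `φ` and `ψ` are mutually inverse; both visibly preserve positive cones and the class
of `1`.
-/

open QuotientAddGroup

section Cohomology

variable {Z W : Type*} [TopologicalSpace Z] [TopologicalSpace W] {T : C(Z, Z)} {S : C(W, W)}

lemma mk_comp_eq_mk (g : C(Z, ℤ)) : (mk (g.comp T) : CohoGroup T) = mk g :=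
  QuotientAddGroup.eq.mpr ⟨g, neg_add_eq_sub _ _⟩

lemma mk_eq_of_eq_comp_iterate {g g' : C(Z, ℤ)} {n : ℕ} (h : ∀ z, g' z = g (T^[n] z)) :
    (mk g' : CohoGroup T) = mk g := by
  induction n generalizing g with
  | zero => exact congrArg mk (ContinuousMap.ext h)
  | succ n ih =>
    rw [ih (g := g.comp T) fun z => (h z).trans (congrArg g (iterate_succ_apply' T n z)),
      mk_comp_eq_mk]

noncomputable def cohoMap (φ : C(Z, W)) (hφ : Semiconj φ T S) : CohoGroup S →+ CohoGroup T :=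
  QuotientAddGroup.map _ _ (ContinuousMap.compAddMonoidHom' φ) <| by
    rintro _ ⟨f, rfl⟩
    exact ⟨f.comp φ, by ext z; simp [hφ z]⟩

lemma cohoMap_cohoMap_of_comp_eq_iterate {φ : C(Z, W)} (hφ : Semiconj φ T S) {ψ : C(W, Z)}
    (hψ : Semiconj ψ S T) {n : ℕ} (h : ∀ z, ψ (φ z) = T^[n] z) (c : CohoGroup T) :
    cohoMap φ hφ (cohoMap ψ hψ c) = c := by
  induction c using QuotientAddGroup.induction_on with
  | H f => exact mk_eq_of_eq_comp_iterate fun z => congrArg f (h z)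

lemma cohoMap_image_posCone_subset (φ : C(Z, W)) (hφ : Semiconj φ T S) :
    cohoMap φ hφ '' posCone S ⊆ posCone T := by
  rintro _ ⟨_, ⟨g, hg, rfl⟩, rfl⟩
  exact ⟨g.comp φ, fun z => hg (φ z), rfl⟩

noncomputable def cohoEquiv {φ : C(Z, W)} (hφ : Semiconj φ T S) {ψ : C(W, Z)}
    (hψ : Semiconj ψ S T) {m n : ℕ} (hψφ : ∀ z, ψ (φ z) = T^[m] z)
    (hφψ : ∀ w, φ (ψ w) = S^[n] w) : CohoGroup S ≃+ CohoGroup T :=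
  (cohoMap φ hφ).toAddEquiv (cohoMap ψ hψ)
    (AddMonoidHom.ext (cohoMap_cohoMap_of_comp_eq_iterate hψ hφ hφψ))
    (AddMonoidHom.ext (cohoMap_cohoMap_of_comp_eq_iterate hφ hψ hψφ))

lemma cohoEquiv_image_posCone {φ : C(Z, W)} (hφ : Semiconj φ T S) {ψ : C(W, Z)}
    (hψ : Semiconj ψ S T) {m n : ℕ} (hψφ : ∀ z, ψ (φ z) = T^[m] z)
    (hφψ : ∀ w, φ (ψ w) = S^[n] w) :
    cohoEquiv hφ hψ hψφ hφψ '' posCone S = posCone T := by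
  let e := cohoEquiv hφ hψ hψφ hφψ
  refine (cohoMap_image_posCone_subset φ hφ).antisymm fun c hc =>
    ⟨e.symm c, cohoMap_image_posCone_subset ψ hψ (mem_image_of_mem _ hc), e.apply_symm_apply c⟩

end Cohomology

lemma exists_semiconj_comp_eq_iterate {X Y : Type*} [TopologicalSpace X] [CompactSpace X]
    [TopologicalSpace Y] [T2Space Y] {σX : C(X, X)} {σY : C(Y, Y)} {φ : C(X, Y)}
    (hsurj : Surjective φ) (hφ : Semiconj φ σX σY) {ℓ : ℕ}
    (hai : ∀ x x', φ x = φ x' → σX^[ℓ] x = σX^[ℓ] x') :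
    ∃ ψ : C(Y, X), Semiconj ψ σY σX ∧ (∀ x, ψ (φ x) = σX^[ℓ] x) ∧
      ∀ y, φ (ψ y) = σY^[ℓ] y := by
  have hquot : Topology.IsQuotientMap φ :=
    φ.continuous.isClosedMap.isQuotientMap φ.continuous hsurj
  let σXℓ : C(X, X) := ⟨σX^[ℓ], σX.continuous.iterate ℓ⟩
  let ψ := hquot.lift σXℓ hai
  have hψφ : ∀ x, ψ (φ x) = σX^[ℓ] x := DFunLike.congr_fun (hquot.lift_comp σXℓ hai)
  refine ⟨ψ, ?_, hψφ, ?_⟩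
  · intro y
    obtain ⟨x, rfl⟩ := hsurj y
    rw [← hφ x, hψφ, hψφ, ← iterate_succ_apply, iterate_succ_apply']
  · intro y
    obtain ⟨x, rfl⟩ := hsurj y
    rw [hψφ, hφ.iterate_right ℓ x]

theorem cohomology_iso_of_almost_injective_sbc_general {A B : Type*}
    [Fintype A] [TopologicalSpace A]
    [TopologicalSpace B] [DiscreteTopology B]
    (X : Set (ℕ → A)) (Y : Set (ℕ → B))
    (hXc : IsClosed X)
    (σX : C(X, X))
    (σY : C(Y, Y))
    (φ : C(X, Y)) (hsurj : Function.Surjective φ)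
    (hequi : ∀ x : X, φ (σX x) = σY (φ x))
    (ℓ : ℕ)
    (hai : ∀ x x' : X, φ x = φ x' → (⇑σX)^[ℓ] x = (⇑σX)^[ℓ] x') :
    ∃ Φ : CohoGroup σY ≃+ CohoGroup σX,
      (∀ g : C(Y, ℤ), Φ (QuotientAddGroup.mk g) = QuotientAddGroup.mk (g.comp φ)) ∧
      Φ '' posCone σY = posCone σX ∧
      Φ (QuotientAddGroup.mk (1 : C(Y, ℤ))) =
        QuotientAddGroup.mk (1 : C(X, ℤ)) := by
  have : CompactSpace X := isCompact_iff_compactSpace.mp hXc.isCompact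
  obtain ⟨ψ, hψ, hψφ, hφψ⟩ := exists_semiconj_comp_eq_iterate hsurj hequi hai
  exact ⟨cohoEquiv hequi hψ hψφ hφψ, fun _ => rfl,
    cohoEquiv_image_posCone hequi hψ hψφ hφψ, rfl⟩

/-- If `φ : X → Y` is a surjective sliding block code between one-sided shift
spaces which is almost injective with lag `ℓ`, then `H(φ)([g]) = [g∘φ]` is a
well-defined isomorphism `H^Y → H^X` of ordered cohomology groups, mapping
`H^Y_+` onto `H^X_+` and `[1_Y]` to `[1_X]`. -/
theorem cohomology_iso_of_almost_injective_sbc {A B : Type*}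
    [Fintype A] [TopologicalSpace A] [DiscreteTopology A]
    [Fintype B] [TopologicalSpace B] [DiscreteTopology B]
    (X : Set (ℕ → A)) (Y : Set (ℕ → B))
    (hXc : IsClosed X) (hXi : ∀ x ∈ X, shiftMap x ∈ X)
    (hYc : IsClosed Y) (hYi : ∀ y ∈ Y, shiftMap y ∈ Y)
    (σX : C(X, X)) (hσX : ∀ x : X, ((σX x : ℕ → A)) = shiftMap (x : ℕ → A))
    (σY : C(Y, Y)) (hσY : ∀ y : Y, ((σY y : ℕ → B)) = shiftMap (y : ℕ → B))
    (φ : C(X, Y)) (hsurj : Function.Surjective φ)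
    (hequi : ∀ x : X, φ (σX x) = σY (φ x))
    (ℓ : ℕ)
    (hai : ∀ x x' : X, φ x = φ x' → (⇑σX)^[ℓ] x = (⇑σX)^[ℓ] x') :
    ∃ Φ : CohoGroup σY ≃+ CohoGroup σX,
      (∀ g : C(Y, ℤ), Φ (QuotientAddGroup.mk g) = QuotientAddGroup.mk (g.comp φ)) ∧
      Φ '' posCone σY = posCone σX ∧
      Φ (QuotientAddGroup.mk (1 : C(Y, ℤ))) =
        QuotientAddGroup.mk (1 : C(X, ℤ)) :=
  cohomology_iso_of_almost_injective_sbc_general X Y hXc σX σY φ hsurj hequi ℓ hai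
end

section
/- Let X be a one-sided shift space, f: X → ℕ₊ continuous, and (X_f, σ_f) as above. The map ι_f^*: C(X_f, ℤ) → C(X, ℤ) given by ι_f^*(ξ)(x) = Σ_{r=0}^{f(σ_X(x))−1} ξ(σ_f^r(x, 0)) induces a well-defined isomorphism H(ι_f): H^{X_f} → H^X of ordered cohomology groups, i.e., H(ι_f)([ξ]) = [ι_f^*(ξ)] is a group isomorphism mapping H^{X_f}_+ onto H^X_+. -/
/-! The fibre sum `S ξ x = ∑_{i < f x} ξ (x, i)` is a surjective homomorphism
`C(X_f, ℤ) → C(X, ℤ)` (a function on `X` is the fibre sum of its extension by zero from the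
base level) mapping the nonnegative functions onto the nonnegative functions, and it pulls the
coboundaries of `σ_X` back exactly onto those of `σ_f`: the fibre sum of `η - η ∘ σ_f`
telescopes to `d - d ∘ σ_X` with `d` the top level of `η`, and conversely, if
`S ξ = h - h ∘ σ_X`, then `ξ` is the coboundary of `(x, i) ↦ h (σ_X x) + ∑_{j ≤ i} ξ (x, j)`.
Hence `S` induces an isomorphism of ordered cohomology groups, and `ι_f^* ξ` differs from `S ξ`
by the coboundary of `ξ (·, 0) - S ξ`. -/

open Function Set

section QuotientEquiv

variable {G H : Type*} [AddGroup G] [AddGroup H] {M : AddSubgroup G} {N : AddSubgroup H}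
  [M.Normal] [N.Normal]

open QuotientAddGroup in
noncomputable def quotientAddEquivOfComapEq (φ : G →+ H) (hφ : Surjective φ)
    (h : N.comap φ = M) : G ⧸ M ≃+ H ⧸ N :=
  (quotientAddEquivOfEq (by rw [← h, ← AddMonoidHom.comap_ker, ker_mk'])).trans
    (quotientKerEquivOfSurjective ((mk' N).comp φ) ((mk'_surjective N).comp hφ))

lemma quotientAddEquivOfComapEq_apply_mk (φ : G →+ H) (hφ : Surjective φ)
    (h : N.comap φ = M) (x : G) :
    quotientAddEquivOfComapEq φ hφ h (x : G ⧸ M) = (φ x : H ⧸ N) :=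
  rfl

end QuotientEquiv

lemma posCone_eq_image {Z : Type*} [TopologicalSpace Z] (T : C(Z, Z)) :
    posCone T = QuotientAddGroup.mk '' {g : C(Z, ℤ) | 0 ≤ g} := by
  ext c
  simp only [posCone, mem_ofPred_eq, mem_image, ContinuousMap.le_def, ContinuousMap.zero_apply]

lemma continuous_sum_range {Y M : Type*} [TopologicalSpace Y] [AddCommMonoid M]
    [TopologicalSpace M] [ContinuousAdd M] {u : Y → ℕ} (hu : Continuous u)
    {g : ℕ → Y → M} (hg : ∀ j, Continuous (g j)) :
    Continuous fun y => ∑ j ∈ Finset.range (u y), g j y := by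
  refine continuous_iff_continuousAt.2 fun y₀ => ?_
  refine (continuous_finsetSum (Finset.range (u y₀)) fun j _ => hg j).continuousAt.congr ?_
  filter_upwards [(isOpen_discrete {u y₀}).preimage hu |>.mem_nhds rfl] with y hy
  rw [show u y = u y₀ from hy]

section Suspension

variable {X : Type*} [TopologicalSpace X] {f : C(X, ℕ)} {Xf : Set (X × ℕ)}
  (hf : ∀ x, 0 < f x) (hXf : ∀ p : X × ℕ, p ∈ Xf ↔ p.2 < f p.1)

/-- Composing with this retraction `(x, i) ↦ (x, min i (f x - 1))` extends functions on `X_f`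
to `X × ℕ`, so that fibre sums can be taken over `Finset.range`. -/
def towerRetract : C(X × ℕ, Xf) where
  toFun p := ⟨(p.1, min p.2 (f p.1 - 1)), (hXf _).2 <| by have := hf p.1; simp; omega⟩
  continuous_toFun := by
    refine Continuous.subtype_mk (continuous_fst.prodMk ?_) _
    exact (continuous_of_discreteTopology (f := fun q : ℕ × ℕ => min q.1 (q.2 - 1))).comp
      (continuous_snd.prodMk (f.continuous.comp continuous_fst))

lemma towerRetract_apply_of_lt {x : X} {i : ℕ} (h : i < f x) :
    towerRetract hf hXf (x, i) = ⟨(x, i), (hXf _).2 h⟩ :=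
  Subtype.ext <| Prod.ext rfl (min_eq_left (Nat.le_sub_one_of_lt h))

def fiberSum : C(Xf, ℤ) →+ C(X, ℤ) where
  toFun ξ := ⟨fun x => ∑ i ∈ Finset.range (f x), ξ (towerRetract hf hXf (x, i)),
    continuous_sum_range f.continuous fun _ =>
      (ξ.comp (towerRetract hf hXf)).continuous.comp (continuous_id.prodMk continuous_const)⟩
  map_zero' := by ext; simp
  map_add' ξ η := by ext; simp [Finset.sum_add_distrib]

lemma fiberSum_apply (ξ : C(Xf, ℤ)) (x : X) :
    fiberSum hf hXf ξ x = ∑ i ∈ Finset.range (f x), ξ (towerRetract hf hXf (x, i)) :=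
  rfl

def extendFromBase (g : C(X, ℤ)) : C(Xf, ℤ) :=
  ⟨fun q => if (q : X × ℕ).2 = 0 then g (q : X × ℕ).1 else 0,
    (continuous_of_discreteTopology (f := fun p : ℤ × ℕ => if p.2 = 0 then p.1 else 0)).comp
      ((g.continuous.comp (continuous_fst.comp continuous_subtype_val)).prodMk
        (continuous_snd.comp continuous_subtype_val))⟩

lemma fiberSum_extendFromBase (g : C(X, ℤ)) : fiberSum hf hXf (extendFromBase g) = g := by
  ext x
  rw [fiberSum_apply, Finset.sum_eq_single_of_mem 0 (Finset.mem_range.2 (hf x))]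
  · simp [extendFromBase, towerRetract_apply_of_lt hf hXf (hf x)]
  · intro i hi hi0
    simp [extendFromBase, towerRetract_apply_of_lt hf hXf (Finset.mem_range.1 hi), hi0]

lemma fiberSum_surjective : Surjective (fiberSum hf hXf) :=
  fun g => ⟨extendFromBase g, fiberSum_extendFromBase hf hXf g⟩

lemma image_fiberSum_nonneg : fiberSum hf hXf '' {ξ | 0 ≤ ξ} = {g | 0 ≤ g} := by
  refine subset_antisymm (image_subset_iff.2 fun ξ hξ x => by
    simpa [fiberSum_apply] using Finset.sum_nonneg fun i _ => hξ (towerRetract hf hXf (x, i)))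
    fun g hg => ⟨extendFromBase g, fun q => ?_, fiberSum_extendFromBase hf hXf g⟩
  simp only [extendFromBase]
  split_ifs
  exacts [hg _, le_rfl]

def baseSection : C(X, Xf) := (towerRetract hf hXf).comp ⟨fun x => (x, 0), by fun_prop⟩

def topSection : C(X, Xf) :=
  (towerRetract hf hXf).comp ⟨fun x => (x, f x - 1),
    continuous_id.prodMk
      ((continuous_of_discreteTopology (f := fun n : ℕ => n - 1)).comp f.continuous)⟩

lemma baseSection_apply (x : X) : baseSection hf hXf x = towerRetract hf hXf (x, 0) :=
  rfl

lemma topSection_apply (x : X) : topSection hf hXf x = towerRetract hf hXf (x, f x - 1) :=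
  rfl

structure IsSuspensionFlow (T : C(X, X)) (f : C(X, ℕ)) (σ : C(Xf, Xf)) : Prop where
  apply_of_snd_eq_zero : ∀ p : Xf, (p : X × ℕ).2 = 0 →
    (σ p : X × ℕ) = (T (p : X × ℕ).1, f (T (p : X × ℕ).1) - 1)
  apply_of_snd_eq_succ : ∀ (p : Xf) (n : ℕ), (p : X × ℕ).2 = n + 1 →
    (σ p : X × ℕ) = ((p : X × ℕ).1, n)

namespace IsSuspensionFlow

variable {T : C(X, X)} {σ : C(Xf, Xf)}

lemma apply_baseSection (hσ : IsSuspensionFlow T f σ) (x : X) :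
    σ (baseSection hf hXf x) = topSection hf hXf (T x) := by
  refine Subtype.ext ?_
  rw [hσ.apply_of_snd_eq_zero _ (by simp [baseSection, towerRetract])]
  simp [baseSection, topSection, towerRetract]

lemma apply_towerRetract_succ (hσ : IsSuspensionFlow T f σ) {x : X} {i : ℕ} (h : i + 1 < f x) :
    σ (towerRetract hf hXf (x, i + 1)) = towerRetract hf hXf (x, i) := by
  rw [towerRetract_apply_of_lt hf hXf h, towerRetract_apply_of_lt hf hXf (by omega)]
  exact Subtype.ext (hσ.apply_of_snd_eq_succ _ i rfl)

lemma fiberSum_sub_comp (hσ : IsSuspensionFlow T f σ) (η : C(Xf, ℤ)) :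
    fiberSum hf hXf (η - η.comp σ)
      = η.comp (topSection hf hXf) - (η.comp (topSection hf hXf)).comp T := by
  ext x
  obtain ⟨n, hn⟩ : ∃ n, f x = n + 1 := Nat.exists_eq_add_one.2 (hf x)
  have hlevels : ∑ i ∈ Finset.range (n + 1), η (σ (towerRetract hf hXf (x, i)))
      = ∑ i ∈ Finset.range n, η (towerRetract hf hXf (x, i))
        + η (topSection hf hXf (T x)) := by
    rw [Finset.sum_range_succ']
    congr 1
    · exact Finset.sum_congr rfl fun i hi =>
        by rw [hσ.apply_towerRetract_succ hf hXf (by simp at hi; omega)]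
    · exact congrArg η (hσ.apply_baseSection hf hXf x)
  simp only [map_sub, ContinuousMap.sub_apply, fiberSum_apply, ContinuousMap.comp_apply, hn,
    hlevels, Finset.sum_range_succ, topSection_apply, add_tsub_cancel_right]
  ring

lemma mem_cobSub_of_fiberSum_eq (hσ : IsSuspensionFlow T f σ) {ξ : C(Xf, ℤ)} {h : C(X, ℤ)}
    (hξ : fiberSum hf hXf ξ = h - h.comp T) : ξ ∈ cobSub σ := by
  let F : X × ℕ → ℤ := fun p =>
    h (T p.1) + ∑ j ∈ Finset.range (p.2 + 1), ξ (towerRetract hf hXf (p.1, j))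
  have hF : Continuous F :=
    ((h.comp T).continuous.comp continuous_fst).add <|
      continuous_sum_range (continuous_snd.add continuous_const) fun _ =>
        (ξ.comp (towerRetract hf hXf)).continuous.comp (continuous_fst.prodMk continuous_const)
  refine ⟨⟨F ∘ Subtype.val, hF.comp continuous_subtype_val⟩, ?_⟩
  ext ⟨⟨x, i⟩, hq⟩
  simp only [ContinuousMap.sub_apply, ContinuousMap.comp_apply, ContinuousMap.coe_mk,
    Function.comp_apply]
  have hqi : towerRetract hf hXf (x, i) = ⟨(x, i), hq⟩ :=
    towerRetract_apply_of_lt hf hXf ((hXf _).1 hq)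
  cases i with
  | zero =>
    have hfib := congrArg (· (T x)) hξ
    simp only [fiberSum_apply, ContinuousMap.sub_apply, ContinuousMap.comp_apply] at hfib
    rw [hσ.apply_of_snd_eq_zero _ rfl]
    simp only [F, Nat.sub_add_cancel (hf (T x)), hfib, zero_add, Finset.sum_range_one, hqi]
    ring
  | succ n =>
    rw [hσ.apply_of_snd_eq_succ _ n rfl]
    simp only [F, Finset.sum_range_succ _ (n + 1), hqi]
    ring

lemma comap_fiberSum_cobSub (hσ : IsSuspensionFlow T f σ) :
    (cobSub T).comap (fiberSum hf hXf) = cobSub σ := by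
  ext ξ
  constructor
  · rintro ⟨h, hh⟩
    exact hσ.mem_cobSub_of_fiberSum_eq hf hXf hh
  · rintro ⟨η, rfl⟩
    exact ⟨_, hσ.fiberSum_sub_comp hf hXf η⟩

lemma iterate_succ_baseSection (hσ : IsSuspensionFlow T f σ) {x : X} {r : ℕ}
    (hr : r < f (T x)) :
    σ^[r + 1] (baseSection hf hXf x) = towerRetract hf hXf (T x, f (T x) - 1 - r) := by
  induction r with
  | zero => exact hσ.apply_baseSection hf hXf x
  | succ r ih =>
    rw [iterate_succ_apply', ih (by omega),
      show f (T x) - 1 - r = f (T x) - 1 - (r + 1) + 1 by omega]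
    exact hσ.apply_towerRetract_succ hf hXf (by omega)

lemma sum_iterate_baseSection (hσ : IsSuspensionFlow T f σ) (ξ : C(Xf, ℤ)) (x : X) :
    ∑ r ∈ Finset.range (f (T x)), ξ (σ^[r] (baseSection hf hXf x))
      = ξ (baseSection hf hXf x) + fiberSum hf hXf ξ (T x) - ξ (baseSection hf hXf (T x)) := by
  obtain ⟨n, hn⟩ : ∃ n, f (T x) = n + 1 := Nat.exists_eq_add_one.2 (hf (T x))
  have horbit : ∀ r ∈ Finset.range n, ξ (σ^[r + 1] (baseSection hf hXf x))
      = ξ (towerRetract hf hXf (T x, n - 1 - r + 1)) := fun r hr => by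
    rw [hσ.iterate_succ_baseSection hf hXf (by simp at hr; omega), hn]
    congr 3
    simp at hr
    omega
  rw [hn, Finset.sum_range_succ', Finset.sum_congr rfl horbit,
    Finset.sum_range_reflect (fun j => ξ (towerRetract hf hXf (T x, j + 1))), fiberSum_apply, hn,
    Finset.sum_range_succ']
  simp only [iterate_zero, id_eq, baseSection_apply]
  ring

lemma sub_fiberSum_mem_cobSub (hσ : IsSuspensionFlow T f σ) {ξ : C(Xf, ℤ)} {g : C(X, ℤ)}
    (hg : ∀ x, g x = ∑ r ∈ Finset.range (f (T x)), ξ (σ^[r] (baseSection hf hXf x))) :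
    g - fiberSum hf hXf ξ ∈ cobSub T := by
  refine ⟨ξ.comp (baseSection hf hXf) - fiberSum hf hXf ξ, ?_⟩
  ext x
  simp only [ContinuousMap.sub_apply, ContinuousMap.comp_apply, hg,
    hσ.sum_iterate_baseSection hf hXf]
  ring

end IsSuspensionFlow

end Suspension

theorem suspension_cohomology_iso_general {A : Type*} [TopologicalSpace A]
    (X : Set (ℕ → A))
    (σ' : C(X, X))
    (f : C(X, ℕ)) (hf : ∀ x : X, 0 < f x)
    (Xf : Set (X × ℕ)) (hXf : ∀ p : X × ℕ, p ∈ Xf ↔ p.2 < f p.1)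
    (σfc : C(Xf, Xf))
    (hσf0 : ∀ p : Xf, (p : X × ℕ).2 = 0 →
      ((σfc p : X × ℕ)) = (σ' (p : X × ℕ).1, f (σ' (p : X × ℕ).1) - 1))
    (hσfs : ∀ (p : Xf) (n : ℕ), (p : X × ℕ).2 = n + 1 →
      ((σfc p : X × ℕ)) = ((p : X × ℕ).1, n))
    (ι : X → Xf) (hι : ∀ x : X, ((ι x : X × ℕ)) = (x, 0)) :
    ∃ Φ : CohoGroup σfc ≃+ CohoGroup σ',
      (∀ (ξ : C(Xf, ℤ)) (g : C(X, ℤ)),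
        (∀ x : X, g x = ∑ r ∈ Finset.range (f (σ' x)), ξ ((⇑σfc)^[r] (ι x))) →
        Φ (QuotientAddGroup.mk ξ) = QuotientAddGroup.mk g) ∧
      Φ '' posCone σfc = posCone σ' := by
  have hσ : IsSuspensionFlow σ' f σfc := ⟨hσf0, hσfs⟩
  have hι' : ι = baseSection hf hXf :=
    funext fun x => Subtype.ext <| by
      rw [hι, baseSection_apply, towerRetract_apply_of_lt hf hXf (hf x)]
  subst hι'
  refine ⟨quotientAddEquivOfComapEq (fiberSum hf hXf) (fiberSum_surjective hf hXf)
    (hσ.comap_fiberSum_cobSub hf hXf), fun ξ g hg => ?_, ?_⟩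
  · rw [quotientAddEquivOfComapEq_apply_mk, eq_comm, QuotientAddGroup.eq_iff_sub_mem]
    exact hσ.sub_fiberSum_mem_cobSub hf hXf hg
  · rw [posCone_eq_image, posCone_eq_image, ← image_fiberSum_nonneg hf hXf, image_image,
      image_image]
    rfl

/-- Let `X` be a one-sided shift space, `f : X → ℕ₊` continuous, and `(X_f, σ_f)`
the suspension. The map `ι_f^*(ξ)(x) = Σ_{r < f(σ_X(x))} ξ(σ_f^r(x, 0))` induces a
well-defined isomorphism `H(ι_f): H^{X_f} → H^X` of ordered cohomology groups,
mapping the positive cone onto the positive cone. -/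
theorem suspension_cohomology_iso {A : Type*} [Fintype A] [TopologicalSpace A]
    [DiscreteTopology A]
    (X : Set (ℕ → A)) (hXc : IsClosed X) (hXi : ∀ x ∈ X, shiftMap x ∈ X)
    (σ' : C(X, X)) (hσ' : ∀ x : X, ((σ' x : ℕ → A)) = shiftMap (x : ℕ → A))
    (f : C(X, ℕ)) (hf : ∀ x : X, 0 < f x)
    (Xf : Set (X × ℕ)) (hXf : ∀ p : X × ℕ, p ∈ Xf ↔ p.2 < f p.1)
    (σfc : C(Xf, Xf))
    (hσf0 : ∀ p : Xf, (p : X × ℕ).2 = 0 →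
      ((σfc p : X × ℕ)) = (σ' (p : X × ℕ).1, f (σ' (p : X × ℕ).1) - 1))
    (hσfs : ∀ (p : Xf) (n : ℕ), (p : X × ℕ).2 = n + 1 →
      ((σfc p : X × ℕ)) = ((p : X × ℕ).1, n))
    (ι : X → Xf) (hι : ∀ x : X, ((ι x : X × ℕ)) = (x, 0)) :
    ∃ Φ : CohoGroup σfc ≃+ CohoGroup σ',
      (∀ (ξ : C(Xf, ℤ)) (g : C(X, ℤ)),
        (∀ x : X, g x = ∑ r ∈ Finset.range (f (σ' x)), ξ ((⇑σfc)^[r] (ι x))) →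
        Φ (QuotientAddGroup.mk ξ) = QuotientAddGroup.mk g) ∧
      Φ '' posCone σfc = posCone σ' :=
  suspension_cohomology_iso_general X σ' f hf Xf hXf σfc hσf0 hσfs ι hι
end
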